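/- Let S be the stabilizer of a code C and N(S) its normalizer in the n-qubit Pauli group. If {E_j} is a set of Pauli operators such that E_j†E_k ∉ N(S)\S for all j, k, then {E_j} is a correctable set of errors for C, i.e., the Knill–Laflamme error-correction conditions hold for {E_j} with respect to the code projector. -/
import Mathlib


open Matrix

noncomputable def pauliMat : Fin 4 → Matrix (Fin 2) (Fin 2) ℂ :=
  ![1, !![0, 1; 1, 0], !![0, -Complex.I; Complex.I, 0], !![1, 0; 0, -1]]

noncomputable def pauliString {n : ℕ} (P : Fin n → Fin 4) :
    Matrix (Fin n → Fin 2) (Fin n → Fin 2) ℂ :=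
  fun x y => ∏ i, pauliMat (P i) (x i) (y i)

def PauliGroup (n : ℕ) : Set (Matrix (Fin n → Fin 2) (Fin n → Fin 2) ℂ) :=
  {g | ∃ c : ℂ, c ∈ ({1, -1, Complex.I, -Complex.I} : Set ℂ) ∧
    ∃ P : Fin n → Fin 4, g = c • pauliString P}


def pmul : Fin 4 → Fin 4 → Fin 4 := ![![0,1,2,3], ![1,0,3,2], ![2,3,0,1], ![3,2,1,0]]

noncomputable def ph : Fin 4 → Fin 4 → ℂ :=
  ![![1,1,1,1], ![1,1,Complex.I,-Complex.I], ![1,-Complex.I,1,Complex.I], ![1,Complex.I,-Complex.I,1]]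

noncomputable def sgn (a b : Fin 4) : ℂ := if a = 0 ∨ b = 0 ∨ a = b then 1 else -1

lemma pauliMat_mul (a b : Fin 4) : pauliMat a * pauliMat b = ph a b • pauliMat (pmul a b) := by
  fin_cases a <;> fin_cases b <;>
    ext i j <;> fin_cases i <;> fin_cases j <;>
    simp [pauliMat, ph, pmul, Matrix.mul_apply, Fin.sum_univ_two, Matrix.vecHead, Matrix.vecTail]

lemma pauliMat_sq (a : Fin 4) : pauliMat a * pauliMat a = 1 := by
  fin_cases a <;>
    ext i j <;> fin_cases i <;> fin_cases j <;>
    simp [pauliMat, Matrix.mul_apply, Fin.sum_univ_two, Matrix.one_apply]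

lemma pauliMat_herm (a : Fin 4) : (pauliMat a)ᴴ = pauliMat a := by
  fin_cases a <;>
    ext i j <;> fin_cases i <;> fin_cases j <;>
    simp [pauliMat, Matrix.conjTranspose_apply, Matrix.one_apply]

lemma ph_sgn (a b : Fin 4) : ph a b = sgn a b * ph b a := by
  fin_cases a <;> fin_cases b <;>
    simp [ph, sgn, Matrix.vecHead, Matrix.vecTail]

lemma pmul_comm (a b : Fin 4) : pmul a b = pmul b a := by fin_cases a <;> fin_cases b <;> rfl

lemma sgn_cases (a b : Fin 4) : sgn a b = 1 ∨ sgn a b = -1 := by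
  unfold sgn; split <;> simp

lemma ph_mem (a b : Fin 4) : ph a b ∈ ({1, -1, Complex.I, -Complex.I} : Set ℂ) := by
  fin_cases a <;> fin_cases b <;>
    simp [ph, Matrix.vecHead, Matrix.vecTail]

lemma phase_mul_mem {a b : ℂ} (ha : a ∈ ({1, -1, Complex.I, -Complex.I} : Set ℂ))
    (hb : b ∈ ({1, -1, Complex.I, -Complex.I} : Set ℂ)) :
    a * b ∈ ({1, -1, Complex.I, -Complex.I} : Set ℂ) := by
  simp only [Set.mem_insert_iff, Set.mem_singleton_iff] at *
  rcases ha with h|h|h|h <;> rcases hb with h'|h'|h'|h' <;> subst h h' <;>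
    simp [Complex.I_mul_I] <;> ring_nf <;> simp [Complex.I_sq]

lemma phase_ne_zero {a : ℂ} (ha : a ∈ ({1, -1, Complex.I, -Complex.I} : Set ℂ)) : a ≠ 0 := by
  simp only [Set.mem_insert_iff, Set.mem_singleton_iff] at ha
  rcases ha with h|h|h|h <;> subst h <;> simp [Complex.I_ne_zero]

lemma pauliString_mul_apply {n : ℕ} (P Q : Fin n → Fin 4) (x y : Fin n → Fin 2) :
    (pauliString P * pauliString Q) x y
      = ∏ i, (pauliMat (P i) * pauliMat (Q i)) (x i) (y i) := by
  rw [Matrix.mul_apply]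
  simp only [Matrix.mul_apply, pauliString]
  rw [Finset.prod_univ_sum]
  rw [Fintype.piFinset_univ]
  congr 1; ext z
  rw [← Finset.prod_mul_distrib]

lemma pauliString_sq {n : ℕ} (P : Fin n → Fin 4) :
    pauliString P * pauliString P = 1 := by
  ext x y
  rw [pauliString_mul_apply]
  simp only [pauliMat_sq, Matrix.one_apply]
  by_cases h : x = y
  · simp [h]
  · obtain ⟨i, hi⟩ := Function.ne_iff.mp h
    rw [if_neg h]
    exact Finset.prod_eq_zero (Finset.mem_univ i) (by simp [hi])

lemma pauliString_herm {n : ℕ} (P : Fin n → Fin 4) :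
    (pauliString P)ᴴ = pauliString P := by
  ext x y
  rw [Matrix.conjTranspose_apply, pauliString, pauliString, star_prod]
  congr 1; ext i
  rw [← Matrix.conjTranspose_apply, pauliMat_herm]

lemma pauliString_mul {n : ℕ} (P Q : Fin n → Fin 4) :
    pauliString P * pauliString Q
      = (∏ i, ph (P i) (Q i)) • pauliString (fun i => pmul (P i) (Q i)) := by
  ext x y
  rw [pauliString_mul_apply, Matrix.smul_apply, pauliString, smul_eq_mul,
    ← Finset.prod_mul_distrib]
  congr 1; ext i
  rw [pauliMat_mul, Matrix.smul_apply, smul_eq_mul]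

lemma phase_prod_mem {n : ℕ} (f : Fin n → ℂ)
    (h : ∀ i, f i ∈ ({1, -1, Complex.I, -Complex.I} : Set ℂ)) :
    ∏ i, f i ∈ ({1, -1, Complex.I, -Complex.I} : Set ℂ) := by
  apply Finset.prod_induction _ (· ∈ ({1, -1, Complex.I, -Complex.I} : Set ℂ))
    (fun a b ha hb => phase_mul_mem ha hb) (by simp)
  exact fun i _ => h i

lemma pg_mul {n : ℕ} {A B : Matrix (Fin n → Fin 2) (Fin n → Fin 2) ℂ}
    (hA : A ∈ PauliGroup n) (hB : B ∈ PauliGroup n) : A * B ∈ PauliGroup n := by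
  obtain ⟨c, hc, P, rfl⟩ := hA
  obtain ⟨d, hd, Q, rfl⟩ := hB
  refine ⟨c * d * ∏ i, ph (P i) (Q i), phase_mul_mem (phase_mul_mem hc hd)
    (phase_prod_mem _ fun i => ph_mem _ _), fun i => pmul (P i) (Q i), ?_⟩
  rw [Matrix.smul_mul, Matrix.mul_smul, pauliString_mul, smul_smul, smul_smul, mul_assoc]

lemma pg_herm {n : ℕ} {A : Matrix (Fin n → Fin 2) (Fin n → Fin 2) ℂ}
    (hA : A ∈ PauliGroup n) : Aᴴ ∈ PauliGroup n := by
  obtain ⟨c, hc, P, rfl⟩ := hA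
  refine ⟨starRingEnd ℂ c, ?_, P, ?_⟩
  · simp only [Set.mem_insert_iff, Set.mem_singleton_iff] at hc ⊢
    rcases hc with h|h|h|h <;> subst h <;> simp
  · rw [Matrix.conjTranspose_smul, pauliString_herm]; rfl

lemma pg_inv {n : ℕ} {A : Matrix (Fin n → Fin 2) (Fin n → Fin 2) ℂ}
    (hA : A ∈ PauliGroup n) : ∃ B, A * B = 1 ∧ B * A = 1 := by
  obtain ⟨c, hc, P, rfl⟩ := hA
  have hc0 : c ≠ 0 := phase_ne_zero hc
  refine ⟨(c * c)⁻¹ • (c • pauliString P), ?_, ?_⟩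
  · rw [Matrix.mul_smul, Matrix.mul_smul, Matrix.smul_mul, pauliString_sq, smul_smul, smul_smul,
      show (c * c)⁻¹ * c * c = 1 by field_simp, one_smul]
  · rw [Matrix.smul_mul, Matrix.smul_mul, Matrix.mul_smul, pauliString_sq, smul_smul, smul_smul,
      show (c * c)⁻¹ * c * c = 1 by field_simp, one_smul]

lemma pg_comm {n : ℕ} {A B : Matrix (Fin n → Fin 2) (Fin n → Fin 2) ℂ}
    (hA : A ∈ PauliGroup n) (hB : B ∈ PauliGroup n) :
    A * B = B * A ∨ A * B = -(B * A) := by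
  obtain ⟨c, hc, P, rfl⟩ := hA
  obtain ⟨d, hd, Q, rfl⟩ := hB
  have h1 : (c • pauliString P) * (d • pauliString Q)
      = (c * d * ∏ i, ph (P i) (Q i)) • pauliString (fun i => pmul (P i) (Q i)) := by
    rw [Matrix.smul_mul, Matrix.mul_smul, pauliString_mul, smul_smul, smul_smul, mul_assoc]
  have h2 : (d • pauliString Q) * (c • pauliString P)
      = (c * d * ∏ i, ph (Q i) (P i)) • pauliString (fun i => pmul (P i) (Q i)) := by
    rw [Matrix.smul_mul, Matrix.mul_smul, pauliString_mul, smul_smul, smul_smul,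
      show (fun i => pmul (Q i) (P i)) = fun i => pmul (P i) (Q i) from
        funext fun i => pmul_comm _ _]
    congr 1
    ring
  have hs : ∏ i, sgn (P i) (Q i) = 1 ∨ ∏ i, sgn (P i) (Q i) = -1 := by
    apply Finset.prod_induction _ (fun x => x = 1 ∨ x = -1)
    · rintro a b (rfl|rfl) (rfl|rfl) <;> simp
    · left; rfl
    · exact fun i _ => sgn_cases _ _
  have key : ∏ i, ph (P i) (Q i) = (∏ i, sgn (P i) (Q i)) * ∏ i, ph (Q i) (P i) := by
    rw [← Finset.prod_mul_distrib]
    exact Finset.prod_congr rfl fun i _ => ph_sgn _ _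
  rcases hs with h|h
  · left; rw [h1, h2, key, h]; ring_nf
  · right; rw [h1, h2, key, h, ← neg_smul]; congr 1; ring

set_option maxHeartbeats 1000000 in
/-- If `{E_j}` is a set of Pauli errors with `E_j† E_k ∉ N(S) \ S` for all `j, k`,
then the Knill–Laflamme conditions hold for `{E_j}` with respect to the code
projector `P = (1/|S|) ∑_{g ∈ S} g`. -/
theorem stabilizer_correctable_errors (n : ℕ)
    (S : Finset (Matrix (Fin n → Fin 2) (Fin n → Fin 2) ℂ))
    (hPauli : ∀ g ∈ S, g ∈ PauliGroup n)
    (hone : (1 : Matrix (Fin n → Fin 2) (Fin n → Fin 2) ℂ) ∈ S)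
    (hmul : ∀ g ∈ S, ∀ h ∈ S, g * h ∈ S)
    (hab : ∀ g ∈ S, ∀ h ∈ S, g * h = h * g)
    (hneg : (-1 : Matrix (Fin n → Fin 2) (Fin n → Fin 2) ℂ) ∉ S)
    {ι : Type*} (E : ι → Matrix (Fin n → Fin 2) (Fin n → Fin 2) ℂ)
    (hE : ∀ j, E j ∈ PauliGroup n)
    (hcond : ∀ j k, (E j)ᴴ * E k ∉
      ({g ∈ PauliGroup n | (fun s => g * s * g⁻¹) '' ↑S = ↑S} \ ↑S :
        Set (Matrix (Fin n → Fin 2) (Fin n → Fin 2) ℂ))) :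
    ∀ j k, ∃ c : ℂ,
      ((S.card : ℂ)⁻¹ • ∑ g ∈ S, g) * ((E j)ᴴ * E k) *
          ((S.card : ℂ)⁻¹ • ∑ g ∈ S, g) =
        c • ((S.card : ℂ)⁻¹ • ∑ g ∈ S, g) := by
  intro j k
  set F := (E j)ᴴ * E k with hFdef
  have hFP : F ∈ PauliGroup n := pg_mul (pg_herm (hE j)) (hE k)
  obtain ⟨B, hFB, hBF⟩ := pg_inv hFP
  set A := ∑ g ∈ S, g with hA
  have hcard : (S.card : ℂ) ≠ 0 := by
    have : S.Nonempty := ⟨1, hone⟩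
    simpa using Finset.card_ne_zero_of_mem hone
  have hAr : ∀ g₀ ∈ S, A * g₀ = A := by
    intro g₀ hg₀
    obtain ⟨B', hB1, hB2⟩ := pg_inv (hPauli g₀ hg₀)
    have hinj : ∀ x ∈ S, ∀ y ∈ S, x * g₀ = y * g₀ → x = y := by
      intro a _ b _ hab'
      have := congrArg (· * B') hab'
      simpa [mul_assoc, hB1] using this
    have himg : S.image (· * g₀) = S := by
      apply Finset.eq_of_subset_of_card_le
      · intro x hx
        simp only [Finset.mem_image] at hx
        obtain ⟨g, hg, rfl⟩ := hx
        exact hmul g hg g₀ hg₀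
      · rw [Finset.card_image_of_injOn hinj]
    calc A * g₀ = ∑ g ∈ S, g * g₀ := by rw [hA, Finset.sum_mul]
      _ = ∑ g ∈ S.image (· * g₀), g := (Finset.sum_image (f := fun x => x) hinj).symm
      _ = A := by rw [himg]
  have hAl : ∀ g₀ ∈ S, g₀ * A = A := by
    intro g₀ hg₀
    obtain ⟨B', hB1, hB2⟩ := pg_inv (hPauli g₀ hg₀)
    have hinj : ∀ x ∈ S, ∀ y ∈ S, g₀ * x = g₀ * y → x = y := by
      intro a _ b _ hab'
      have := congrArg (B' * ·) hab'
      simpa [← mul_assoc, hB2] using this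
    have himg : S.image (g₀ * ·) = S := by
      apply Finset.eq_of_subset_of_card_le
      · intro x hx
        simp only [Finset.mem_image] at hx
        obtain ⟨g, hg, rfl⟩ := hx
        exact hmul g₀ hg₀ g hg
      · rw [Finset.card_image_of_injOn hinj]
    calc g₀ * A = ∑ g ∈ S, g₀ * g := by rw [hA, Finset.mul_sum]
      _ = ∑ g ∈ S.image (g₀ * ·), g := (Finset.sum_image (f := fun x => x) hinj).symm
      _ = A := by rw [himg]
  have hAA : A * A = (S.card : ℂ) • A := by
    calc A * A = ∑ g ∈ S, A * g := by rw [hA, Finset.mul_sum]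
      _ = ∑ _g ∈ S, A := Finset.sum_congr rfl fun g hg => hAr g hg
      _ = S.card • A := Finset.sum_const A
      _ = (S.card : ℂ) • A := (Nat.cast_smul_eq_nsmul ℂ _ _).symm
  by_cases hFS : F ∈ S
  · refine ⟨1, ?_⟩
    rw [one_smul, Matrix.smul_mul, Matrix.smul_mul, Matrix.mul_smul,
      hAr F hFS, hAA, smul_smul, smul_smul]
    congr 1
    field_simp
  · have hFnorm : ¬((fun s => F * s * F⁻¹) '' ↑S = ↑S) := by
      intro himg
      exact hcond j k ⟨⟨hFP, himg⟩, fun h => hFS (Finset.mem_coe.mp h)⟩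
    have hanti : ∃ g ∈ S, F * g = -(g * F) := by
      by_contra hno
      push_neg at hno
      apply hFnorm
      have hFinv : F * F⁻¹ = 1 := by rw [Matrix.inv_eq_right_inv hFB]; exact hFB
      have hcomm : ∀ s ∈ (↑S : Set (Matrix (Fin n → Fin 2) (Fin n → Fin 2) ℂ)),
          F * s * F⁻¹ = s := by
        intro s hs
        have hsS : s ∈ S := Finset.mem_coe.mp hs
        have hc := (pg_comm hFP (hPauli s hsS)).resolve_right (hno s hsS)
        rw [hc, mul_assoc, hFinv, mul_one]
      calc (fun s => F * s * F⁻¹) '' ↑S = id '' ↑S := Set.image_congr hcomm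
        _ = ↑S := Set.image_id _
    obtain ⟨g₀, hg₀, hac⟩ := hanti
    refine ⟨0, ?_⟩
    have h1 : A * F * A = -(A * F * A) := by
      calc A * F * A = A * F * (g₀ * A) := by rw [hAl g₀ hg₀]
        _ = A * (F * g₀) * A := by rw [← mul_assoc, mul_assoc A F g₀]
        _ = A * -(g₀ * F) * A := by rw [hac]
        _ = -(A * g₀ * F * A) := by simp [mul_assoc]
        _ = -(A * F * A) := by rw [hAr g₀ hg₀]
    have h2 : A * F * A + A * F * A = 0 := by
      nth_rewrite 1 [h1]; simp
    rw [← two_smul ℂ] at h2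
    have h0 : A * F * A = 0 := by
      rcases smul_eq_zero.mp h2 with h | h
      · exact absurd h (by norm_num)
      · exact h
    rw [zero_smul, Matrix.smul_mul, Matrix.smul_mul, Matrix.mul_smul, h0]
    simp
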